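/- arXiv:2312.05852 — 2 statements merged into one kernel-verified Lean document; each statement's English description precedes it below -/
import Mathlib

section
/- Let ξ be a DoS sequence. For every n ≥ 1 and every real t with t > 0 and h_n ≤ t < h_{n+1} (where h_{n+1} := +∞ if ξ has only n intervals), one has |Ξ(0,t)| / t ≤ |Ξ(0, h_n + τ_n)| / (h_n + τ_n). -/
open MeasureTheory Filter Set

/-- The union of all DoS intervals `[h n, h n + τ n)`, `n ≥ 1`. -/
def DoSUnion (h τ : ℕ → ℝ) : Set ℝ :=
  ⋃ n ∈ Set.Ici (1 : ℕ), Set.Ico (h n) (h n + τ n)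

/-- `|Ξ(0,t)|`: the Lebesgue measure of the part of `[0,t]` under DoS attack. -/
noncomputable def xiMeas (h τ : ℕ → ℝ) (t : ℝ) : ℝ :=
  (volume (DoSUnion h τ ∩ Set.Icc 0 t)).toReal

/-- `n_ξ(0,t)`: the number of DoS off-to-on transitions `h n` lying in `[0,t]`. -/
noncomputable def nXi (h : ℕ → ℝ) (t : ℝ) : ℕ :=
  Set.ncard ({x : ℝ | ∃ n : ℕ, 1 ≤ n ∧ h n = x} ∩ Set.Icc 0 t)

/-- `ξ = (h, τ)` is a DoS sequence. -/
def IsDoS (h τ : ℕ → ℝ) : Prop :=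
  0 ≤ h 1 ∧ (∀ n, 1 ≤ n → 0 ≤ τ n) ∧ (∀ n, 1 ≤ n → h n + τ n < h (n + 1))

/-- `B` is a duration-bound of `ξ`. -/
def IsDurationBound (h τ : ℕ → ℝ) (B : ℝ) : Prop :=
  0 ≤ B ∧ B ≤ 1 ∧ ∃ κ > (0 : ℝ), ∀ t ≥ (0 : ℝ), xiMeas h τ t ≤ κ + B * t

/-- `D(ξ)`: the set of duration-bounds of `ξ`. -/
def durBounds (h τ : ℕ → ℝ) : Set ℝ := {B | IsDurationBound h τ B}

/-- `B` is a (finite) frequency-bound of `ξ`. -/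
def IsFreqBound (h : ℕ → ℝ) (B : ℝ) : Prop :=
  0 ≤ B ∧ ∃ Λ > (0 : ℝ), ∀ t ≥ (0 : ℝ), (nXi h t : ℝ) ≤ Λ + B * t

/-- `F(ξ)`: the set of finite frequency-bounds of `ξ`. -/
def freqBounds (h : ℕ → ℝ) : Set ℝ := {B | IsFreqBound h B}

/-- Assumption 1: `ξ` is not an edge case. -/
def Assumption1 (h τ : ℕ → ℝ) : Prop :=
  sInf (durBounds h τ) < 1 ∧ (freqBounds h).Nonempty ∧
    ∃ Γ > (0 : ℝ), ∀ n, 1 ≤ n → τ n ≤ Γ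

/-- `Bd` is the duration estimator generated by (8). -/
def IsDurEstimator (h τ : ℕ → ℝ) (l : ℕ) (ε₀ θ : ℝ) (Bd : ℝ → ℝ) : Prop :=
  (∀ t, 0 ≤ t → t < h l + τ l → Bd t = ε₀) ∧
  ∀ n, ∀ hn : l ≤ n, ∀ t, h n + τ n ≤ t → t < h (n + 1) + τ (n + 1) →
    Bd t = (Finset.Icc l n).sup' (Finset.nonempty_Icc.mpr hn)
      (fun i => max ε₀ (θ * (xiMeas h τ (h i + τ i) / (h i + τ i)) + (1 - θ)))

/-- `Bf` is the frequency estimator generated by (9). -/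
def IsFreqEstimator (h : ℕ → ℝ) (l : ℕ) (ε₀ θ : ℝ) (Bf : ℝ → ℝ) : Prop :=
  (∀ t, 0 ≤ t → t < h l → Bf t = ε₀) ∧
  ∀ n, ∀ hn : l ≤ n, ∀ t, h n ≤ t → t < h (n + 1) →
    Bf t = (Finset.Icc l n).sup' (Finset.nonempty_Icc.mpr hn)
      (fun i => max ε₀ (((i : ℝ) / h i) / θ))

lemma dos_measurable (h τ : ℕ → ℝ) : MeasurableSet (DoSUnion h τ) := by
  unfold DoSUnion
  exact MeasurableSet.biUnion (Set.to_countable _) fun _ _ => measurableSet_Ico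

lemma dos_h_mono (h τ : ℕ → ℝ) (hξ : IsDoS h τ) :
    ∀ m k, 1 ≤ m → m ≤ k → h m ≤ h k := by
  obtain ⟨h1, hτ, hstep⟩ := hξ
  intro m k hm hmk
  induction k, hmk using Nat.le_induction with
  | base => exact le_rfl
  | succ k hmk ih =>
    have h1k : 1 ≤ k := le_trans hm hmk
    have := hstep k h1k
    have := hτ k h1k
    linarith

lemma dos_hτ_mono (h τ : ℕ → ℝ) (hξ : IsDoS h τ) :
    ∀ m k, 1 ≤ m → m ≤ k → h m + τ m ≤ h k + τ k := by
  obtain ⟨h1, hτ, hstep⟩ := hξ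
  intro m k hm hmk
  induction k, hmk using Nat.le_induction with
  | base => exact le_rfl
  | succ k hmk ih =>
    have h1k : 1 ≤ k := le_trans hm hmk
    have := hstep k h1k
    have := hτ (k + 1) (le_trans h1k (Nat.le_succ k))
    linarith

lemma dos_inter_eq (h τ : ℕ → ℝ) (hξ : IsDoS h τ) (n : ℕ) (hn : 1 ≤ n)
    (t : ℝ) (hct : h n + τ n ≤ t) (ht2 : t < h (n + 1)) :
    DoSUnion h τ ∩ Set.Icc 0 t = DoSUnion h τ ∩ Set.Icc 0 (h n + τ n) := by
  ext x
  simp only [DoSUnion, Set.mem_inter_iff, Set.mem_iUnion, Set.mem_Ici,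
    Set.mem_Ico, Set.mem_Icc, exists_prop]
  constructor
  · rintro ⟨⟨m, hm, hx1, hx2⟩, hx0, hxt⟩
    refine ⟨⟨m, hm, hx1, hx2⟩, hx0, ?_⟩
    rcases le_or_gt m n with hmn | hmn
    · have := dos_hτ_mono h τ hξ m n hm hmn
      linarith
    · have : h (n + 1) ≤ h m := dos_h_mono h τ hξ (n + 1) m (le_trans hn (Nat.le_succ n)) hmn
      linarith
  · rintro ⟨hA, hx0, hxc⟩
    exact ⟨hA, hx0, le_trans hxc hct⟩

lemma xiMeas_nonneg (h τ : ℕ → ℝ) (t : ℝ) : 0 ≤ xiMeas h τ t :=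
  ENNReal.toReal_nonneg

lemma xiMeas_le_self (h τ : ℕ → ℝ) (t : ℝ) (ht : 0 ≤ t) : xiMeas h τ t ≤ t := by
  unfold xiMeas
  have hle : volume (DoSUnion h τ ∩ Set.Icc 0 t) ≤ volume (Set.Icc (0 : ℝ) t) :=
    measure_mono Set.inter_subset_right
  have hv : volume (Set.Icc (0 : ℝ) t) = ENNReal.ofReal (t - 0) := Real.volume_Icc
  calc (volume (DoSUnion h τ ∩ Set.Icc 0 t)).toReal
      ≤ (volume (Set.Icc (0 : ℝ) t)).toReal := by
        apply ENNReal.toReal_mono _ hle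
        rw [hv]; exact ENNReal.ofReal_ne_top
    _ = t := by rw [hv, ENNReal.toReal_ofReal (by linarith), sub_zero]

lemma xiMeas_finite (h τ : ℕ → ℝ) (t : ℝ) :
    volume (DoSUnion h τ ∩ Set.Icc 0 t) ≠ ⊤ := by
  have hle : volume (DoSUnion h τ ∩ Set.Icc 0 t) ≤ volume (Set.Icc (0 : ℝ) t) :=
    measure_mono Set.inter_subset_right
  have hv : volume (Set.Icc (0 : ℝ) t) = ENNReal.ofReal (t - 0) := Real.volume_Icc
  exact ne_top_of_le_ne_top (by rw [hv]; exact ENNReal.ofReal_ne_top) hle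

lemma xiMeas_add (h τ : ℕ → ℝ) (hξ : IsDoS h τ) (n : ℕ) (hn : 1 ≤ n)
    (t : ℝ) (ht0 : 0 < t) (ht1 : h n ≤ t) (htc : t < h n + τ n) :
    xiMeas h τ (h n + τ n) = xiMeas h τ t + (h n + τ n - t) := by
  set c := h n + τ n with hc
  have hIcc : Set.Icc (0 : ℝ) t ∪ Set.Ioc t c = Set.Icc 0 c :=
    Set.Icc_union_Ioc_eq_Icc (le_of_lt ht0) (le_of_lt htc)
  have hsplit : DoSUnion h τ ∩ Set.Icc 0 c =
      (DoSUnion h τ ∩ Set.Icc 0 t) ∪ (DoSUnion h τ ∩ Set.Ioc t c) := by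
    rw [← Set.inter_union_distrib_left, hIcc]
  have hdisj : Disjoint (DoSUnion h τ ∩ Set.Icc 0 t) (DoSUnion h τ ∩ Set.Ioc t c) := by
    apply Set.disjoint_left.mpr
    rintro x ⟨_, _, hxt⟩ ⟨_, hx2, _⟩
    exact absurd hxt (not_le.mpr hx2)
  have hmeas2 : MeasurableSet (DoSUnion h τ ∩ Set.Ioc t c) :=
    (dos_measurable h τ).inter measurableSet_Ioc
  have hvol2 : volume (DoSUnion h τ ∩ Set.Ioc t c) = ENNReal.ofReal (c - t) := by
    apply le_antisymm
    · calc volume (DoSUnion h τ ∩ Set.Ioc t c) ≤ volume (Set.Ioc t c) :=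
            measure_mono Set.inter_subset_right
        _ = ENNReal.ofReal (c - t) := Real.volume_Ioc
    · calc ENNReal.ofReal (c - t) = volume (Set.Ioo t c) := Real.volume_Ioo.symm
        _ ≤ volume (DoSUnion h τ ∩ Set.Ioc t c) := by
            apply measure_mono
            rintro x ⟨hx1, hx2⟩
            refine ⟨?_, hx1, le_of_lt hx2⟩
            simp only [DoSUnion, Set.mem_iUnion, Set.mem_Ici, Set.mem_Ico, exists_prop]
            exact ⟨n, hn, by linarith, hx2⟩
    
  have hkey : volume (DoSUnion h τ ∩ Set.Icc 0 c) =
      volume (DoSUnion h τ ∩ Set.Icc 0 t) + ENNReal.ofReal (c - t) := by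
    rw [hsplit, measure_union hdisj hmeas2, hvol2]
  unfold xiMeas
  rw [hkey, ENNReal.toReal_add (xiMeas_finite h τ t) ENNReal.ofReal_ne_top,
    ENNReal.toReal_ofReal (by linarith)]

/-- For each `n ≥ 1` and every `t > 0` with `h n ≤ t < h (n+1)`, the duration
ratio at `t` is dominated by the ratio at `h n + τ n`. -/
theorem xiMeas_ratio_le (h τ : ℕ → ℝ) (hξ : IsDoS h τ)
    (n : ℕ) (hn : 1 ≤ n) (t : ℝ) (ht0 : 0 < t)
    (ht1 : h n ≤ t) (ht2 : t < h (n + 1)) :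
    xiMeas h τ t / t ≤ xiMeas h τ (h n + τ n) / (h n + τ n) := by
  obtain ⟨h1, hτ, hstep⟩ := hξ
  set c := h n + τ n with hc
  have hc0 : 0 ≤ c := by
    have := dos_h_mono h τ ⟨h1, hτ, hstep⟩ 1 n le_rfl hn
    have := hτ n hn
    simp only [hc]; linarith
  rcases le_or_gt c t with hct | htc
  · -- t ≥ c : xiMeas t = xiMeas c
    have heq : xiMeas h τ t = xiMeas h τ c := by
      unfold xiMeas
      rw [dos_inter_eq h τ ⟨h1, hτ, hstep⟩ n hn t hct ht2]
    rw [heq]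
    rcases eq_or_lt_of_le hc0 with hc0' | hc0'
    · have : xiMeas h τ c = 0 := by
        have h1 : xiMeas h τ c ≤ c := xiMeas_le_self h τ c hc0
        have h2 : 0 ≤ xiMeas h τ c := xiMeas_nonneg h τ c
        linarith [hc0'.symm ▸ h1]
      simp [this]
    · exact div_le_div_of_nonneg_left (xiMeas_nonneg h τ c) hc0' hct
  · -- h n ≤ t < c
    have hadd := xiMeas_add h τ ⟨h1, hτ, hstep⟩ n hn t ht0 ht1 htc
    set m := xiMeas h τ t with hm
    have hm0 : 0 ≤ m := xiMeas_nonneg h τ t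
    have hmt : m ≤ t := xiMeas_le_self h τ t (le_of_lt ht0)
    have hcpos : 0 < c := lt_trans ht0 htc
    rw [hadd, div_le_div_iff₀ ht0 hcpos]
    nlinarith
end

section
/- (Frequency part of Theorem 1.) Let ξ be a DoS sequence satisfying Assumption 1, and let B̂_f(t) be generated by the DoS estimator with parameters ℓ ≥ 2, ε₀ ∈ (0,1), θ ∈ (0,1). Then there exists a finite T ≥ 0 such that for every t ≥ T, the value B̂_f(t) is a frequency-bound of ξ (i.e., B̂_f(t) ∈ F(ξ)). -/
open MeasureTheory Filter Set

lemma dos_lt {h τ : ℕ → ℝ} (hξ : IsDoS h τ) {a b : ℕ} (ha : 1 ≤ a) (hab : a < b) :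
    h a < h b := by
  have hstep : ∀ m, 1 ≤ m → h m < h (m + 1) := fun m hm =>
    lt_of_le_of_lt (le_add_of_nonneg_right (hξ.2.1 m hm)) (hξ.2.2 m hm)
  induction b with
  | zero => omega
  | succ n ih =>
    rcases Nat.lt_succ_iff_lt_or_eq.mp hab with h1 | h1
    · exact (ih h1).trans (hstep n (by omega))
    · subst h1; exact hstep a ha

lemma dos_le {h τ : ℕ → ℝ} (hξ : IsDoS h τ) {a b : ℕ} (ha : 1 ≤ a) (hab : a ≤ b) :
    h a ≤ h b := by
  rcases eq_or_lt_of_le hab with rfl | hlt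
  · exact le_rfl
  · exact (dos_lt hξ ha hlt).le

lemma dos_nonneg {h τ : ℕ → ℝ} (hξ : IsDoS h τ) {n : ℕ} (hn : 1 ≤ n) : 0 ≤ h n :=
  hξ.1.trans (dos_le hξ le_rfl hn)

lemma nXi_eq {h τ : ℕ → ℝ} (hξ : IsDoS h τ) {N : ℕ} (hN : 1 ≤ N) : nXi h (h N) = N := by
  have hset : {x : ℝ | ∃ n : ℕ, 1 ≤ n ∧ h n = x} ∩ Set.Icc 0 (h N) = h '' Set.Icc 1 N := by
    ext x
    constructor
    · rintro ⟨⟨k, hk1, rfl⟩, _, hk2⟩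
      refine ⟨k, ⟨hk1, ?_⟩, rfl⟩
      by_contra hc
      push_neg at hc
      exact absurd hk2 (not_le.mpr (dos_lt hξ hN hc))
    · rintro ⟨k, ⟨hk1, hk2⟩, rfl⟩
      exact ⟨⟨k, hk1, rfl⟩, dos_nonneg hξ hk1, dos_le hξ hk1 hk2⟩
  have hinj : Set.InjOn h (Set.Icc 1 N) := by
    intro a ha b hb hab
    rcases lt_trichotomy a b with hc | hc | hc
    · exact absurd hab (ne_of_lt (dos_lt hξ ha.1 hc))
    · exact hc
    · exact absurd hab.symm (ne_of_lt (dos_lt hξ hb.1 hc))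
  rw [nXi, hset, Set.ncard_image_of_injOn hinj, ← Finset.coe_Icc, Set.ncard_coe_finset,
    Nat.card_Icc]
  omega

lemma nXi_le' {h τ : ℕ → ℝ} (hξ : IsDoS h τ) (m : ℕ) {t : ℝ} (ht : t < h (m + 1)) :
    nXi h t ≤ m := by
  have hsub : {x : ℝ | ∃ n : ℕ, 1 ≤ n ∧ h n = x} ∩ Set.Icc 0 t ⊆ h '' Set.Icc 1 m := by
    rintro x ⟨⟨k, hk1, rfl⟩, _, hk2⟩
    refine ⟨k, ⟨hk1, ?_⟩, rfl⟩
    by_contra hc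
    push_neg at hc
    exact absurd (hk2.trans_lt ht) (not_lt.mpr (dos_le hξ (by omega) (by omega)))
  calc nXi h t ≤ (h '' Set.Icc 1 m).ncard :=
        Set.ncard_le_ncard hsub ((Set.finite_Icc 1 m).image h)
    _ ≤ (Set.Icc 1 m).ncard := Set.ncard_image_le (Set.finite_Icc _ _)
    _ ≤ m := by
        rw [← Finset.coe_Icc, Set.ncard_coe_finset, Nat.card_Icc]; omega

/-- Theorem 1 (frequency part): under Assumption 1, the estimator `Bf` generated
by (9) becomes a reliable frequency-bound after some finite time `T`. -/
theorem estimator_frequency_reliable (h τ : ℕ → ℝ) (hξ : IsDoS h τ)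
    (hA1 : Assumption1 h τ) (l : ℕ) (hl : 2 ≤ l) (ε₀ θ : ℝ)
    (hε₀ : 0 < ε₀ ∧ ε₀ < 1) (hθ : 0 < θ ∧ θ < 1) (Bf : ℝ → ℝ)
    (hBf : IsFreqEstimator h l ε₀ θ Bf) :
    ∃ T ≥ (0 : ℝ), ∀ t ≥ T, Bf t ∈ freqBounds h := by
  obtain ⟨-, ⟨B, hB0, Λ, hΛ0, hΛ⟩, -⟩ := hA1
  -- `h` is unbounded above
  have hub : ∀ C : ℝ, ∃ n, 1 ≤ n ∧ C < h n := by
    by_contra hc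
    push_neg at hc
    obtain ⟨C, hC⟩ := hc
    obtain ⟨N, hN⟩ := exists_nat_gt (Λ + B * C)
    have hN1 : 1 ≤ max N 1 := le_max_right _ _
    have hbig : Λ + B * C < (max N 1 : ℕ) := by
      refine hN.trans_le ?_
      exact_mod_cast le_max_left N 1
    have hbd := hΛ (h (max N 1)) (dos_nonneg hξ hN1)
    rw [nXi_eq hξ hN1] at hbd
    have hBC : B * h (max N 1) ≤ B * C := mul_le_mul_of_nonneg_left (hC _ hN1) hB0
    linarith
  have hl1 : (1 : ℕ) ≤ l := by omega
  have hl0 : 0 < h l := lt_of_le_of_lt hξ.1 (dos_lt hξ le_rfl (by omega))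
  -- the set of observed ratios is bounded above
  set S : Set ℝ := {x | ∃ i : ℕ, l ≤ i ∧ x = (i : ℝ) / h i} with hS
  have hSne : S.Nonempty := ⟨(l : ℝ) / h l, l, le_rfl, rfl⟩
  have hratio : ∀ i : ℕ, l ≤ i → (i : ℝ) / h i ≤ B + Λ / h l := by
    intro i hi
    have hil : h l ≤ h i := dos_le hξ hl1 hi
    have hi0 : 0 < h i := lt_of_lt_of_le hl0 hil
    have hnle := hΛ (h i) hi0.le
    rw [nXi_eq hξ (by omega : 1 ≤ i)] at hnle
    rw [div_le_iff₀ hi0]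
    have e1 : Λ / h l * h l = Λ := div_mul_cancel₀ _ (ne_of_gt hl0)
    have e2 : 0 ≤ Λ / h l := div_nonneg hΛ0.le hl0.le
    nlinarith [mul_le_mul_of_nonneg_left hil e2]
  have hSbdd : BddAbove S := ⟨B + Λ / h l, by rintro x ⟨i, hi, rfl⟩; exact hratio i hi⟩
  set s := sSup S with hs
  have hsl : (l : ℝ) / h l ≤ s := le_csSup hSbdd ⟨l, le_rfl, rfl⟩
  have hlpos : (0 : ℝ) < (l : ℝ) := by exact_mod_cast (by omega : 0 < l)
  have hs0 : 0 < s := lt_of_lt_of_le (div_pos hlpos hl0) hsl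
  have hθs : θ * s < s := by nlinarith [hθ.1, hθ.2, hs0]
  obtain ⟨x, ⟨n0, hn0l, rfl⟩, hx⟩ := exists_lt_of_lt_csSup hSne hθs
  have hn00 : 0 < h n0 := lt_of_lt_of_le hl0 (dos_le hξ hl1 hn0l)
  refine ⟨h n0, hn00.le, ?_⟩
  intro t ht
  -- locate `t` in `[h n, h (n+1))` with `n ≥ n0`
  have hP : ∃ m : ℕ, t < h (n0 + m + 1) := by
    obtain ⟨k, hk1, hk2⟩ := hub t
    exact ⟨k, lt_of_lt_of_le hk2 (dos_le hξ hk1 (by omega))⟩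
  set m := Nat.find hP with hm
  have hm2 : t < h (n0 + m + 1) := Nat.find_spec hP
  have hm1 : h (n0 + m) ≤ t := by
    rcases Nat.eq_zero_or_pos m with h0 | h0
    · rw [h0]; simpa using ht
    · have hmin : ¬ t < h (n0 + (m - 1) + 1) := Nat.find_min hP (by omega)
      have heq : n0 + (m - 1) + 1 = n0 + m := by omega
      rw [heq] at hmin
      exact not_lt.mp hmin
  set n := n0 + m with hn
  have hln : l ≤ n := le_trans hn0l (Nat.le_add_right _ _)
  have hBft := hBf.2 n hln t hm1 hm2
  have hmem : n0 ∈ Finset.Icc l n := Finset.mem_Icc.mpr ⟨hn0l, Nat.le_add_right _ _⟩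
  have hge : max ε₀ (((n0 : ℝ) / h n0) / θ) ≤ Bf t := by
    rw [hBft]
    exact Finset.le_sup' (fun i : ℕ => max ε₀ (((i : ℝ) / h i) / θ)) hmem
  have hgt : s < Bf t := by
    have h2 : s < ((n0 : ℝ) / h n0) / θ := by
      rw [lt_div_iff₀ hθ.1]
      linarith [hx]
    exact lt_of_lt_of_le h2 (le_trans (le_max_right _ _) hge)
  -- `Bf t` is a frequency bound
  have hc0 : 0 < Bf t := hs0.trans hgt
  refine ⟨hc0.le, (l : ℝ), hlpos, ?_⟩
  intro t' ht'
  have hQ : ∃ k : ℕ, t' < h (k + 1) := by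
    obtain ⟨j, hj1, hj2⟩ := hub t'
    exact ⟨j, lt_of_lt_of_le hj2 (dos_le hξ hj1 (by omega))⟩
  set k := Nat.find hQ with hk
  have hk2 : t' < h (k + 1) := Nat.find_spec hQ
  have hnXi : nXi h t' ≤ k := nXi_le' hξ k hk2
  by_cases hkl : k < l
  · have : (nXi h t' : ℝ) ≤ (l : ℝ) := by
      exact_mod_cast le_trans hnXi (by omega)
    nlinarith [mul_nonneg hc0.le ht']
  · push_neg at hkl
    have hk1 : 1 ≤ k := by omega
    have hmin : ¬ t' < h (k - 1 + 1) := Nat.find_min hQ (by omega)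
    have heq : k - 1 + 1 = k := by omega
    rw [heq] at hmin
    have hkt : h k ≤ t' := not_lt.mp hmin
    have hk0 : 0 < h k := lt_of_lt_of_le hl0 (dos_le hξ hl1 hkl)
    have hks : (k : ℝ) / h k ≤ s := le_csSup hSbdd ⟨k, hkl, rfl⟩
    have hkc : (k : ℝ) < Bf t * h k := by
      have : (k : ℝ) / h k < Bf t := lt_of_le_of_lt hks hgt
      exact (div_lt_iff₀ hk0).mp this
    have hmul : Bf t * h k ≤ Bf t * t' := mul_le_mul_of_nonneg_left hkt hc0.le
    have hcast : (nXi h t' : ℝ) ≤ (k : ℝ) := by exact_mod_cast hnXi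
    linarith
end
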